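/- arXiv:math/0503255 — 5 statements merged into one kernel-verified Lean document; each statement's English description precedes it below -/
import Mathlib

section
/- Let A be a standard operator algebra on a dense subspace D (i.e. containing all finite rank operators), let I ⊆ A be a nonzero two-sided ideal, and let F : I → A be an additive map satisfying F(UX) = F(U)X and F(XU) = X F(U) for all U ∈ I and X ∈ A. Then there exists λ ∈ ℂ such that F(U) = λU for all U ∈ I. (In other words, every standard operator algebra is centrally closed.) -/
open scoped InnerProductSpace

noncomputable def rankOne {H : Type*} [NormedAddCommGroup H] [InnerProductSpace ℂ H]
    (D : Submodule ℂ H) (ψ φ : D) : D →ₗ[ℂ] D where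
  toFun χ := (⟪(φ : H), (χ : H)⟫_ℂ) • ψ
  map_add' x y := by
    simp [inner_add_right, add_smul]
  map_smul' c x := by
    simp [inner_smul_right, smul_smul]

def IsFiniteRankOp {H : Type*} [NormedAddCommGroup H] [InnerProductSpace ℂ H]
    (D : Submodule ℂ H) (F : D →ₗ[ℂ] D) : Prop :=
  F ∈ Submodule.span ℂ (Set.range fun p : D × D => rankOne D p.1 p.2)

def IsFormalAdjoint {H : Type*} [NormedAddCommGroup H] [InnerProductSpace ℂ H]
    (D : Submodule ℂ H) (A S : D →ₗ[ℂ] D) : Prop :=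
  ∀ x y : D, ⟪((A x : D) : H), (y : H)⟫_ℂ = ⟪(x : H), ((S y : D) : H)⟫_ℂ

def IsUnitaryOn {H : Type*} [NormedAddCommGroup H] [InnerProductSpace ℂ H]
    (D : Submodule ℂ H) (U : D →ₗ[ℂ] D) : Prop :=
  Function.Bijective U ∧
    ∀ x y : D, ⟪((U x : D) : H), ((U y : D) : H)⟫_ℂ = ⟪(x : H), (y : H)⟫_ℂ

def IsRankOneOp {H : Type*} [NormedAddCommGroup H] [InnerProductSpace ℂ H]
    (D : Submodule ℂ H) (F : D →ₗ[ℂ] D) : Prop :=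
  ∃ ψ φ : D, ψ ≠ 0 ∧ φ ≠ 0 ∧ F = rankOne D ψ φ

theorem stmt3 {H : Type*} [NormedAddCommGroup H] [InnerProductSpace ℂ H]
    (D : Submodule ℂ H) (hD : Dense (D : Set H))
    (A : Subalgebra ℂ (D →ₗ[ℂ] D)) (hstd : ∀ ψ φ : D, rankOne D ψ φ ∈ A)
    (I : Set (D →ₗ[ℂ] D)) (hIA : I ⊆ (A : Set (D →ₗ[ℂ] D)))
    (hI0 : (0 : D →ₗ[ℂ] D) ∈ I)
    (hIadd : ∀ U ∈ I, ∀ V ∈ I, U + V ∈ I)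
    (hIneg : ∀ U ∈ I, -U ∈ I)
    (hIl : ∀ U ∈ I, ∀ X ∈ A, X ∘ₗ U ∈ I)
    (hIr : ∀ U ∈ I, ∀ X ∈ A, U ∘ₗ X ∈ I)
    (hIne : I ≠ {0})
    (F : (D →ₗ[ℂ] D) → (D →ₗ[ℂ] D))
    (hFA : ∀ U ∈ I, F U ∈ A)
    (hFadd : ∀ U ∈ I, ∀ V ∈ I, F (U + V) = F U + F V)
    (hF1 : ∀ U ∈ I, ∀ X ∈ A, F (U ∘ₗ X) = F U ∘ₗ X)
    (hF2 : ∀ U ∈ I, ∀ X ∈ A, F (X ∘ₗ U) = X ∘ₗ F U) :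
    ∃ c : ℂ, ∀ U ∈ I, F U = c • U := by
  classical
  obtain ⟨W, hWI, hW0⟩ : ∃ W ∈ I, W ≠ 0 := by
    by_contra h
    push_neg at h
    apply hIne
    ext V
    exact ⟨fun hV => h V hV, fun hV => hV ▸ hI0⟩
  obtain ⟨x₀, hx₀⟩ : ∃ x, W x ≠ 0 := by
    by_contra h; push_neg at h; exact hW0 (LinearMap.ext h)
  set ψ : D := W x₀ with hψdef
  have hψ0 : ψ ≠ 0 := hx₀
  set a : ℂ := ⟪(ψ : H), (ψ : H)⟫_ℂ with ha
  have ha0 : a ≠ 0 := by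
    rw [ha]
    intro h
    exact hψ0 (by exact_mod_cast inner_self_eq_zero.mp h)
  set P : D →ₗ[ℂ] D := rankOne D ψ ψ with hP
  have hrk : ∀ ψ' φ' χ : D, rankOne D ψ' φ' χ = (⟪(φ' : H), (χ : H)⟫_ℂ) • ψ' :=
    fun _ _ _ => rfl
  have hIsmul : ∀ U ∈ I, ∀ c : ℂ, c • U ∈ I := by
    intro U hU c
    have h1 : (c • (1 : D →ₗ[ℂ] D)) ∈ A := A.smul_mem A.one_mem c
    have h2 := hIl U hU _ h1
    have he : (c • (1 : D →ₗ[ℂ] D)) ∘ₗ U = c • U := by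
      refine LinearMap.ext fun x => ?_
      simp
    rwa [he] at h2
  have hPI : P ∈ I := by
    have hC : P ∘ₗ (W ∘ₗ rankOne D x₀ ψ) ∈ I :=
      hIl _ (hIr W hWI _ (hstd _ _)) _ (hstd _ _)
    have heq : P = a⁻¹ • (P ∘ₗ (W ∘ₗ rankOne D x₀ ψ)) := by
      refine LinearMap.ext fun χ => ?_
      simp only [LinearMap.smul_apply, LinearMap.comp_apply, hP, hrk, map_smul, ← hψdef,
        Submodule.coe_smul, inner_smul_right, smul_smul, ← ha]
      congr 1
      field_simp
    rw [heq]
    exact hIsmul _ hC _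
  have hPA : P ∈ A := hIA hPI
  set T : D →ₗ[ℂ] D := F P with hT
  set b : ℂ := ⟪(ψ : H), ((T ψ : D) : H)⟫_ℂ with hb
  refine ⟨(a * a)⁻¹ * b, ?_⟩
  intro U hU
  have hUA : U ∈ A := hIA hU
  refine LinearMap.ext fun φ => ?_
  set R : D →ₗ[ℂ] D := rankOne D φ ψ with hR
  have hRA : R ∈ A := hstd _ _
  have key : F U ∘ₗ (R ∘ₗ P) = (U ∘ₗ R) ∘ₗ T := by
    have h1 : F (U ∘ₗ (R ∘ₗ P)) = F U ∘ₗ (R ∘ₗ P) :=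
      hF1 U hU _ (A.mul_mem hRA hPA)
    have h2 : F ((U ∘ₗ R) ∘ₗ P) = (U ∘ₗ R) ∘ₗ T :=
      hF2 P hPI _ (A.mul_mem hUA hRA)
    rw [← h1, ← h2, LinearMap.comp_assoc]
  have keyψ := congrArg (fun (G : D →ₗ[ℂ] D) => G ψ) key
  simp only [LinearMap.comp_apply] at keyψ
  have hPψ : P ψ = a • ψ := by rw [hP, hrk, ← ha]
  have hRψ : R ψ = a • φ := by rw [hR, hrk, ← ha]
  have hRP : R (P ψ) = (a * a) • φ := by rw [hPψ, map_smul, hRψ, smul_smul]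
  have hTR : R (T ψ) = b • φ := by rw [hR, hrk, ← hb]
  rw [hRP, hTR, map_smul, map_smul] at keyψ
  have h4 := congrArg (fun v : D => (a * a)⁻¹ • v) keyψ
  simp only [smul_smul] at h4
  rw [inv_mul_cancel₀ (mul_ne_zero ha0 ha0), one_smul] at h4
  rw [h4, LinearMap.smul_apply]
end

section
/- Every nonzero two-sided ideal of a standard operator algebra A on a dense subspace D contains all finite rank operators on D. -/
open scoped InnerProductSpace

theorem stmt4 {H : Type*} [NormedAddCommGroup H] [InnerProductSpace ℂ H]
    (D : Submodule ℂ H) (hD : Dense (D : Set H))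
    (A : Subalgebra ℂ (D →ₗ[ℂ] D)) (hstd : ∀ ψ φ : D, rankOne D ψ φ ∈ A)
    (I : Set (D →ₗ[ℂ] D)) (hIA : I ⊆ (A : Set (D →ₗ[ℂ] D)))
    (hI0 : (0 : D →ₗ[ℂ] D) ∈ I)
    (hIadd : ∀ U ∈ I, ∀ V ∈ I, U + V ∈ I)
    (hIneg : ∀ U ∈ I, -U ∈ I)
    (hIl : ∀ U ∈ I, ∀ X ∈ A, X ∘ₗ U ∈ I)
    (hIr : ∀ U ∈ I, ∀ X ∈ A, U ∘ₗ X ∈ I)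
    (hIne : I ≠ {0}) :
    ∀ ψ φ : D, rankOne D ψ φ ∈ I := by
  obtain ⟨T, hTI, hT0⟩ : ∃ T ∈ I, T ≠ 0 := by
    by_contra h
    push_neg at h
    exact hIne (Set.eq_of_subset_of_subset (fun x hx => h x hx)
      (fun x hx => by rw [Set.mem_singleton_iff] at hx; rw [hx]; exact hI0))
  obtain ⟨χ, hχ⟩ : ∃ χ : D, T χ ≠ 0 := by
    by_contra h
    push_neg at h
    exact hT0 (LinearMap.ext fun x => h x)
  intro ψ φ
  set c : ℂ := ⟪((T χ : D) : H), ((T χ : D) : H)⟫_ℂ with hc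
  have hcne : c ≠ 0 := by
    rw [hc]
    intro h
    exact hχ (Subtype.coe_injective (inner_self_eq_zero.mp h))
  have key : rankOne D ψ φ = (rankOne D (c⁻¹ • ψ) (T χ)) ∘ₗ T ∘ₗ (rankOne D χ φ) := by
    apply LinearMap.ext
    intro x
    simp only [rankOne, LinearMap.comp_apply, LinearMap.coe_mk, AddHom.coe_mk, map_smul,
      Submodule.coe_smul, inner_smul_right, smul_smul]
    rw [← hc]
    congr 1
    field_simp
  rw [key]
  exact hIr _ (hIl _ hTI _ (hstd _ _)) _ (hstd _ _)
end

section
/- Let A be a standard operator algebra on a dense subspace D and let (L, R) be a pair of additive maps L, R : A → A satisfying L(XY) = L(X)Y, R(XY) = X R(Y), and X L(Y) = R(X) Y for all X, Y ∈ A (a double centralizer). Then there exists a linear operator T : D → D with L(A) = TA and R(A) = AT for all A ∈ A. -/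
open scoped InnerProductSpace

/-!
Fix a unit vector `φ ∈ D` and write `E ψ` for the rank-one map `χ ↦ ⟪φ, χ⟫ ψ`, so that
`E ψ φ = ψ` and `E ψ = E ψ ∘ E φ`. Put `T ψ := L (E ψ) φ`. The left centralizer property gives
`L (E ψ) = L (E ψ) ∘ E φ = E (T ψ) = T ∘ E ψ`, hence `L X ∘ E ψ = L (E (X ψ)) = T ∘ X ∘ E ψ`, and
`R X ∘ E ψ = X ∘ L (E ψ) = X ∘ T ∘ E ψ`. Two maps that agree after composition with every `E ψ`
agree, because `E ψ φ = ψ`.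
-/

namespace LinearMap

variable {K M : Type*} [CommSemiring K] [AddCommMonoid M] [Module K M] {f : M →ₗ[K] K} {e : M}

theorem smulRight_apply_of_apply_eq_one (hfe : f e = 1) (v : M) : f.smulRight v e = v := by
  rw [smulRight_apply, hfe, one_smul]

theorem comp_smulRight (X : M →ₗ[K] M) (v : M) : X ∘ₗ f.smulRight v = f.smulRight (X v) := by
  ext; simp

theorem smulRight_comp_smulRight_of_apply_eq_one (hfe : f e = 1) (v : M) :
    f.smulRight v ∘ₗ f.smulRight e = f.smulRight v := by
  ext; simp [hfe]

theorem ext_of_comp_smulRight (hfe : f e = 1) {S S' : M →ₗ[K] M}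
    (h : ∀ v, S ∘ₗ f.smulRight v = S' ∘ₗ f.smulRight v) : S = S' := by
  ext v
  simpa [hfe] using congr($(h v) e)

variable {A : Subalgebra K (M →ₗ[K] M)}

theorem exists_eq_comp_of_map_comp (hfe : f e = 1) (hA : ∀ v, f.smulRight v ∈ A)
    (L : (M →ₗ[K] M) → (M →ₗ[K] M)) (hLadd : ∀ X ∈ A, ∀ Y ∈ A, L (X + Y) = L X + L Y)
    (hL : ∀ X ∈ A, ∀ Y ∈ A, L (X ∘ₗ Y) = L X ∘ₗ Y) :
    ∃ T : M →ₗ[K] M, ∀ X ∈ A, L X = T ∘ₗ X := by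
  let T : M →ₗ[K] M :=
    { toFun v := L (f.smulRight v) e
      map_add' v w := by
        have : f.smulRight (v + w) = f.smulRight v + f.smulRight w := by ext; simp
        simp only [this, hLadd _ (hA v) _ (hA w), add_apply]
      map_smul' c v := by
        have : f.smulRight (c • v) = f.smulRight v ∘ₗ (c • f.smulRight e) := by
          ext; simp [hfe, smul_smul, mul_comm]
        simp only [this, hL _ (hA v) _ (A.smul_mem (hA e) c), comp_apply, smul_apply,
          smulRight_apply_of_apply_eq_one hfe, map_smul, RingHom.id_apply] }
  have hT : ∀ v, L (f.smulRight v) = T ∘ₗ f.smulRight v := fun v => by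
    conv_lhs => rw [← smulRight_comp_smulRight_of_apply_eq_one hfe v, hL _ (hA v) _ (hA e)]
    rw [comp_smulRight, comp_smulRight]
    rfl
  refine ⟨T, fun X hX => ext_of_comp_smulRight hfe fun v => ?_⟩
  rw [← hL X hX _ (hA v), comp_smulRight, hT, comp_assoc, comp_smulRight X]

theorem eq_comp_of_comp_map_eq (hfe : f e = 1) (hA : ∀ v, f.smulRight v ∈ A)
    {L R : (M →ₗ[K] M) → (M →ₗ[K] M)} {T : M →ₗ[K] M} (hLT : ∀ X ∈ A, L X = T ∘ₗ X)
    (hLR : ∀ X ∈ A, ∀ Y ∈ A, X ∘ₗ L Y = R X ∘ₗ Y) {X : M →ₗ[K] M} (hX : X ∈ A) :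
    R X = X ∘ₗ T :=
  ext_of_comp_smulRight hfe fun v => by rw [← hLR X hX _ (hA v), hLT _ (hA v), comp_assoc]

end LinearMap

theorem exists_inner_self_eq_one {𝕜 E : Type*} [RCLike 𝕜] [NormedAddCommGroup E]
    [InnerProductSpace 𝕜 E] [Nontrivial E] : ∃ x : E, ⟪x, x⟫_𝕜 = 1 := by
  obtain ⟨x, hx⟩ := exists_ne (0 : E)
  refine ⟨(‖x‖⁻¹ : 𝕜) • x, ?_⟩
  rw [inner_self_eq_norm_sq_to_K, norm_smul_inv_norm hx]
  simp

theorem rankOne_eq_smulRight {H : Type*} [NormedAddCommGroup H] [InnerProductSpace ℂ H]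
    (D : Submodule ℂ H) (ψ φ : D) : rankOne D ψ φ = (innerₛₗ ℂ φ).smulRight ψ :=
  rfl

theorem stmt5_general {H : Type*} [NormedAddCommGroup H] [InnerProductSpace ℂ H]
    (D : Submodule ℂ H)
    (A : Subalgebra ℂ (D →ₗ[ℂ] D)) (hstd : ∀ ψ φ : D, rankOne D ψ φ ∈ A)
    (L R : (D →ₗ[ℂ] D) → (D →ₗ[ℂ] D))
    (hLadd : ∀ X ∈ A, ∀ Y ∈ A, L (X + Y) = L X + L Y)
    (hL : ∀ X ∈ A, ∀ Y ∈ A, L (X ∘ₗ Y) = L X ∘ₗ Y)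
    (hLR : ∀ X ∈ A, ∀ Y ∈ A, X ∘ₗ L Y = R X ∘ₗ Y) :
    ∃ T : D →ₗ[ℂ] D, ∀ A' ∈ A, L A' = T ∘ₗ A' ∧ R A' = A' ∘ₗ T := by
  cases subsingleton_or_nontrivial D with
  | inl _ => exact ⟨0, fun _ _ => ⟨Subsingleton.elim _ _, Subsingleton.elim _ _⟩⟩
  | inr _ =>
    obtain ⟨φ, hφ⟩ := exists_inner_self_eq_one (𝕜 := ℂ) (E := D)
    have hA : ∀ ψ, (innerₛₗ ℂ φ).smulRight ψ ∈ A := fun ψ => by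
      rw [← rankOne_eq_smulRight]
      exact hstd ψ φ
    obtain ⟨T, hLT⟩ := LinearMap.exists_eq_comp_of_map_comp hφ hA L hLadd hL
    exact ⟨T, fun X hX => ⟨hLT X hX, LinearMap.eq_comp_of_comp_map_eq hφ hA hLT hLR hX⟩⟩

theorem stmt5 {H : Type*} [NormedAddCommGroup H] [InnerProductSpace ℂ H]
    (D : Submodule ℂ H) (hD : Dense (D : Set H))
    (A : Subalgebra ℂ (D →ₗ[ℂ] D)) (hstd : ∀ ψ φ : D, rankOne D ψ φ ∈ A)
    (L R : (D →ₗ[ℂ] D) → (D →ₗ[ℂ] D))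
    (hLadd : ∀ X ∈ A, ∀ Y ∈ A, L (X + Y) = L X + L Y)
    (hRadd : ∀ X ∈ A, ∀ Y ∈ A, R (X + Y) = R X + R Y)
    (hL : ∀ X ∈ A, ∀ Y ∈ A, L (X ∘ₗ Y) = L X ∘ₗ Y)
    (hR : ∀ X ∈ A, ∀ Y ∈ A, R (X ∘ₗ Y) = X ∘ₗ R Y)
    (hLR : ∀ X ∈ A, ∀ Y ∈ A, X ∘ₗ L Y = R X ∘ₗ Y) :
    ∃ T : D →ₗ[ℂ] D, ∀ A' ∈ A, L A' = T ∘ₗ A' ∧ R A' = A' ∘ₗ T :=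
  stmt5_general D A hstd L R hLadd hL hLR
end

section
/- Suppose Φ(T) = c U T⁺ V for all T in a unital standard *-operator algebra A, where c ≠ 0 and U, V are unitary operators of the Hilbert space mapping D onto D. Then Φ does not satisfy the property that A⁺B = 0 implies Φ(A)⁺Φ(B) = 0; i.e. there exist A, B ∈ A with A⁺B = 0 but Φ(A)⁺Φ(B) ≠ 0. -/
open scoped InnerProductSpace

/-!
Pick nonzero orthogonal vectors `ψ₁, ψ₂` in `D` (possible since a dense subspace of a space of
dimension at least two is itself of dimension at least two) and take `A = |ψ₁⟩⟨ψ₁|`,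
`B = |ψ₂⟩⟨ψ₁|`. Then `A⁺B = ⟨ψ₁, ψ₂⟩ |ψ₁⟩⟨ψ₁| = 0`, while `Φ(A) = c U |ψ₁⟩⟨ψ₁| V` and
`Φ(B) = c U |ψ₁⟩⟨ψ₂| V` both have range `ℂ Uψ₁`, so `⟨Φ(A)x, Φ(B)y⟩ ≠ 0` for `Vx = ψ₁`, `Vy = ψ₂`.
-/

theorem exists_ne_zero_inner_eq_zero {𝕜 E : Type*} [RCLike 𝕜] [NormedAddCommGroup E]
    [InnerProductSpace 𝕜 E] (hE : 2 ≤ Module.rank 𝕜 E) :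
    ∃ x y : E, x ≠ 0 ∧ y ≠ 0 ∧ ⟪x, y⟫_𝕜 = 0 := by
  have : Nontrivial E := rank_pos_iff_nontrivial.1 (lt_of_lt_of_le (by norm_num) hE)
  obtain ⟨x, hx⟩ := exists_ne (0 : E)
  have hspan : (𝕜 ∙ x) ≠ ⊤ := by
    intro htop
    have hle : Module.rank 𝕜 (𝕜 ∙ x) ≤ 1 := by simpa using rank_span_le (R := 𝕜) {x}
    rw [htop, rank_top] at hle
    exact absurd (hE.trans hle) (by norm_num)
  obtain ⟨y, hy, hy0⟩ := (Submodule.ne_bot_iff _).1 (mt Submodule.orthogonal_eq_bot_iff.1 hspan)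
  exact ⟨x, y, hx, hy0, Submodule.mem_orthogonal_singleton_iff_inner_right.1 hy⟩

theorem Submodule.eq_top_of_dense_of_finiteDimensional {𝕜 E : Type*} [RCLike 𝕜]
    [NormedAddCommGroup E] [NormedSpace 𝕜 E] {D : Submodule 𝕜 E} (hD : Dense (D : Set E))
    [FiniteDimensional 𝕜 D] : D = ⊤ := by
  rw [← D.closed_of_finiteDimensional.submodule_topologicalClosure_eq]
  exact D.dense_iff_topologicalClosure_eq_top.1 hD

theorem Submodule.natCast_le_rank_of_dense {𝕜 E : Type*} [RCLike 𝕜]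
    [NormedAddCommGroup E] [NormedSpace 𝕜 E] {D : Submodule 𝕜 E} (hD : Dense (D : Set E))
    {n : ℕ} (hE : n ≤ Module.rank 𝕜 E) : n ≤ Module.rank 𝕜 D := by
  by_contra! hlt
  have : FiniteDimensional 𝕜 D :=
    Module.rank_lt_aleph0_iff.1 (hlt.trans Cardinal.natCast_lt_aleph0)
  rw [eq_top_of_dense_of_finiteDimensional hD, rank_top] at hlt
  exact hlt.not_ge hE

section FormalAdjoint

variable {H : Type*} [NormedAddCommGroup H] [InnerProductSpace ℂ H] (D : Submodule ℂ H)

@[simp]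
theorem rankOne_apply (ψ φ χ : D) : rankOne D ψ φ χ = ⟪(φ : H), (χ : H)⟫_ℂ • ψ := rfl

theorem rankOne_comp_rankOne (ψ φ χ ω : D) :
    rankOne D ψ φ ∘ₗ rankOne D χ ω = ⟪(φ : H), (χ : H)⟫_ℂ • rankOne D ψ ω := by
  ext x
  simp [smul_smul, mul_comm]

theorem isFormalAdjoint_rankOne (ψ φ : D) :
    IsFormalAdjoint D (rankOne D ψ φ) (rankOne D φ ψ) := by
  intro x y
  simp only [rankOne_apply, Submodule.coe_smul, inner_smul_left, inner_smul_right, inner_conj_symm]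
  ring

variable {D}

theorem IsFormalAdjoint.unique (hD : Dense (D : Set H)) {A S S' : D →ₗ[ℂ] D}
    (hS : IsFormalAdjoint D A S) (hS' : IsFormalAdjoint D A S') : S = S' := by
  refine LinearMap.ext fun y => Subtype.coe_injective ?_
  refine hD.eq_of_inner_right ℂ fun v hv => ?_
  exact (hS ⟨v, hv⟩ y).symm.trans (hS' ⟨v, hv⟩ y)

theorem IsFormalAdjoint.inner_eq_zero_of_comp_eq_zero {A S B : D →ₗ[ℂ] D}
    (hS : IsFormalAdjoint D A S) (hSB : S ∘ₗ B = 0) (x y : D) :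
    ⟪(A x : H), (B y : H)⟫_ℂ = 0 := by
  rw [hS, ← LinearMap.comp_apply, hSB]
  simp

end FormalAdjoint

theorem stmt10 {H : Type*} [NormedAddCommGroup H] [InnerProductSpace ℂ H]
    (D : Submodule ℂ H) (hD : Dense (D : Set H))
    (hdim : 2 ≤ Module.rank ℂ H)
    (𝒜 : Subalgebra ℂ (D →ₗ[ℂ] D)) (hstd : ∀ ψ φ : D, rankOne D ψ φ ∈ 𝒜)
    (dag : (D →ₗ[ℂ] D) → (D →ₗ[ℂ] D))
    (hdag : ∀ A ∈ 𝒜, dag A ∈ 𝒜 ∧ IsFormalAdjoint D A (dag A))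
    (U V : D →ₗ[ℂ] D) (hU : IsUnitaryOn D U) (hV : IsUnitaryOn D V)
    (c : ℂ) (hc : c ≠ 0)
    (Φ : (D →ₗ[ℂ] D) → (D →ₗ[ℂ] D))
    (hΦ : ∀ A ∈ 𝒜, Φ A = c • (U ∘ₗ dag A ∘ₗ V))
    (hΦmem : ∀ A ∈ 𝒜, Φ A ∈ 𝒜) :
    ∃ A ∈ 𝒜, ∃ B ∈ 𝒜, dag A ∘ₗ B = 0 ∧ dag (Φ A) ∘ₗ Φ B ≠ 0 := by
  obtain ⟨ψ₁, ψ₂, hψ₁, hψ₂, horth⟩ :=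
    exists_ne_zero_inner_eq_zero (𝕜 := ℂ) (D.natCast_le_rank_of_dense hD (n := 2) hdim)
  rw [Submodule.coe_inner] at horth
  have hA := hstd ψ₁ ψ₁
  have hB := hstd ψ₂ ψ₁
  have dagA : dag (rankOne D ψ₁ ψ₁) = rankOne D ψ₁ ψ₁ :=
    (hdag _ hA).2.unique hD (isFormalAdjoint_rankOne D ψ₁ ψ₁)
  have dagB : dag (rankOne D ψ₂ ψ₁) = rankOne D ψ₁ ψ₂ :=
    (hdag _ hB).2.unique hD (isFormalAdjoint_rankOne D ψ₂ ψ₁)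
  refine ⟨_, hA, _, hB, by rw [dagA, rankOne_comp_rankOne, horth, zero_smul], fun h0 => ?_⟩
  obtain ⟨x, hx⟩ := hV.1.2 ψ₁
  obtain ⟨y, hy⟩ := hV.1.2 ψ₂
  have hAx : Φ (rankOne D ψ₁ ψ₁) x = (c * ⟪(ψ₁ : H), ψ₁⟫_ℂ) • U ψ₁ := by
    simp [hΦ _ hA, dagA, hx, mul_smul]
  have hBy : Φ (rankOne D ψ₂ ψ₁) y = (c * ⟪(ψ₂ : H), ψ₂⟫_ℂ) • U ψ₁ := by
    simp [hΦ _ hB, dagB, hy, mul_smul]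
  have hxy := (hdag _ (hΦmem _ hA)).2.inner_eq_zero_of_comp_eq_zero h0 x y
  rw [hAx, hBy, Submodule.coe_smul, Submodule.coe_smul, inner_smul_left, inner_smul_right,
    hU.2] at hxy
  simp [hc, hψ₁, hψ₂] at hxy
end

section
/- Let F = ψ ⊗ φ be a rank-one operator on a dense subspace D of an infinite-dimensional Hilbert space, H₀ = span{φ, ψ}, and let Q be a linear operator on D with range contained in H₀^⊥ and range dense in H₀^⊥ (so Q has corank at most 2), satisfying F⁺Q = FQ⁺ = 0. If S₁, S₂ are rank-one operators with ranges contained in a fixed 2-dimensional subspace and satisfying S₁⁺S₂ = S₁S₂⁺ = 0, S_i⁺Q = S_iQ⁺ = 0 (i = 1, 2), then the ranges of S₁ and S₂ are mutually orthogonal and orthogonal to the closure of the range of Q; in particular, if the range of Q has codimension 1 in H, no such pair S₁, S₂ exists. -/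
open scoped InnerProductSpace

theorem stmt13 {H : Type*} [NormedAddCommGroup H] [InnerProductSpace ℂ H]
    (hinf : ¬ FiniteDimensional ℂ H)
    (D : Submodule ℂ H) (hD : Dense (D : Set H))
    (ψ φ : D) (hψ : ψ ≠ 0) (hφ : φ ≠ 0)
    (Q Qdag : D →ₗ[ℂ] D) (hQadj : IsFormalAdjoint D Q Qdag)
    (hQran : ∀ x : D, ((Q x : D) : H) ∈ (Submodule.span ℂ {(φ : H), (ψ : H)})ᗮ)
    (hQdense : closure (Set.range fun x : D => ((Q x : D) : H)) =
      ((Submodule.span ℂ {(φ : H), (ψ : H)})ᗮ : Set H))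
    (hFQ : rankOne D φ ψ ∘ₗ Q = 0) (hFQ' : rankOne D ψ φ ∘ₗ Qdag = 0)
    (W : Submodule ℂ H) (hW : Module.finrank ℂ W = 2)
    (ρ₁ ρ₂ χ₁ χ₂ : D)
    (hρ₁ : ρ₁ ≠ 0) (hρ₂ : ρ₂ ≠ 0) (hχ₁ : χ₁ ≠ 0) (hχ₂ : χ₂ ≠ 0)
    (hρ₁W : (ρ₁ : H) ∈ W) (hρ₂W : (ρ₂ : H) ∈ W)
    (hS12 : rankOne D χ₁ ρ₁ ∘ₗ rankOne D ρ₂ χ₂ = 0)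
    (hS12' : rankOne D ρ₁ χ₁ ∘ₗ rankOne D χ₂ ρ₂ = 0)
    (hS1Q : rankOne D χ₁ ρ₁ ∘ₗ Q = 0) (hS1Q' : rankOne D ρ₁ χ₁ ∘ₗ Qdag = 0)
    (hS2Q : rankOne D χ₂ ρ₂ ∘ₗ Q = 0) (hS2Q' : rankOne D ρ₂ χ₂ ∘ₗ Qdag = 0) :
    (⟪(ρ₁ : H), (ρ₂ : H)⟫_ℂ = 0 ∧
      (∀ x : D, ⟪(ρ₁ : H), ((Q x : D) : H)⟫_ℂ = 0 ∧ ⟪(ρ₂ : H), ((Q x : D) : H)⟫_ℂ = 0)) ∧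
    (Module.finrank ℂ
        (H ⧸ (Submodule.map D.subtype (LinearMap.range Q)).topologicalClosure) = 1 → False) := by

  -- Basic nonvanishing facts
  have hρ₁H : (ρ₁ : H) ≠ 0 := fun h => hρ₁ (Subtype.ext h)
  have hρ₂H : (ρ₂ : H) ≠ 0 := fun h => hρ₂ (Subtype.ext h)
  have hχ₂H : (χ₂ : H) ≠ 0 := fun h => hχ₂ (Subtype.ext h)
  -- orthogonality of ρ₁ and ρ₂
  have horth : ⟪(ρ₁ : H), (ρ₂ : H)⟫_ℂ = 0 := by
    have h := LinearMap.congr_fun hS12 χ₂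
    simp only [LinearMap.comp_apply, LinearMap.zero_apply, rankOne, LinearMap.coe_mk,
      AddHom.coe_mk] at h
    rw [Submodule.coe_smul, inner_smul_right] at h
    rcases smul_eq_zero.1 h with h | h
    · rcases mul_eq_zero.1 h with h | h
      · exact absurd h (inner_self_ne_zero.2 hχ₂H)
      · exact h
    · exact absurd h hχ₁
  -- ρᵢ orthogonal to range of Q
  have h1 : ∀ x : D, ⟪(ρ₁ : H), ((Q x : D) : H)⟫_ℂ = 0 := by
    intro x
    have h := LinearMap.congr_fun hS1Q x
    simp only [LinearMap.comp_apply, LinearMap.zero_apply, rankOne, LinearMap.coe_mk,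
      AddHom.coe_mk] at h
    rcases smul_eq_zero.1 h with h | h
    · exact h
    · exact absurd h hχ₁
  have h2 : ∀ x : D, ⟪(ρ₂ : H), ((Q x : D) : H)⟫_ℂ = 0 := by
    intro x
    have h := LinearMap.congr_fun hS2Q x
    simp only [LinearMap.comp_apply, LinearMap.zero_apply, rankOne, LinearMap.coe_mk,
      AddHom.coe_mk] at h
    rcases smul_eq_zero.1 h with h | h
    · exact h
    · exact absurd h hχ₂
  refine ⟨⟨horth, fun x => ⟨h1 x, h2 x⟩⟩, ?_⟩
  intro hcod
  set M := (Submodule.map D.subtype (LinearMap.range Q)).topologicalClosure with hM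
  -- ρᵢ orthogonal to M
  have hle1 : ∀ m ∈ M, ⟪(ρ₁ : H), m⟫_ℂ = 0 := by
    have hsub : Submodule.map D.subtype (LinearMap.range Q) ≤ (Submodule.span ℂ {(ρ₁ : H)})ᗮ := by
      rintro _ ⟨y, ⟨x, rfl⟩, rfl⟩
      intro u hu
      rcases Submodule.mem_span_singleton.1 hu with ⟨c, rfl⟩
      simp [inner_smul_left, h1 x]
    have := Submodule.topologicalClosure_minimal _ hsub
      (Submodule.isClosed_orthogonal _)
    intro m hm
    exact (this hm) _ (Submodule.mem_span_singleton_self _)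
  have hle2 : ∀ m ∈ M, ⟪(ρ₂ : H), m⟫_ℂ = 0 := by
    have hsub : Submodule.map D.subtype (LinearMap.range Q) ≤ (Submodule.span ℂ {(ρ₂ : H)})ᗮ := by
      rintro _ ⟨y, ⟨x, rfl⟩, rfl⟩
      intro u hu
      rcases Submodule.mem_span_singleton.1 hu with ⟨c, rfl⟩
      simp [inner_smul_left, h2 x]
    have := Submodule.topologicalClosure_minimal _ hsub
      (Submodule.isClosed_orthogonal _)
    intro m hm
    exact (this hm) _ (Submodule.mem_span_singleton_self _)
  -- quotient has rank 1
  rcases finrank_eq_one_iff'.1 hcod with ⟨v, hv, hall⟩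
  obtain ⟨a, ha⟩ := hall (M.mkQ (ρ₁ : H))
  obtain ⟨b, hb⟩ := hall (M.mkQ (ρ₂ : H))
  have hπρ₁ : M.mkQ (ρ₁ : H) ≠ 0 := by
    intro h
    have : (ρ₁ : H) ∈ M := (Submodule.Quotient.mk_eq_zero M).1 h
    have := hle1 _ this
    exact (inner_self_ne_zero.2 hρ₁H) this
  have ha0 : a ≠ 0 := by
    rintro rfl
    rw [zero_smul] at ha
    exact hπρ₁ ha.symm
  -- ρ₂ - (b/a) • ρ₁ ∈ M
  have hmem : (ρ₂ : H) - (b / a) • (ρ₁ : H) ∈ M := by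
    rw [← Submodule.Quotient.mk_eq_zero M]
    have : M.mkQ ((ρ₂ : H) - (b / a) • (ρ₁ : H)) = 0 := by
      rw [map_sub, map_smul, ← ha, ← hb, smul_smul, div_mul_cancel₀ _ ha0]
      exact sub_self _
    exact this
  have := hle2 _ hmem
  rw [inner_sub_right, inner_smul_right] at this
  have h21 : ⟪(ρ₂ : H), (ρ₁ : H)⟫_ℂ = 0 := by
    rw [← inner_conj_symm, horth, map_zero]
  rw [h21, mul_zero, sub_zero] at this
  exact (inner_self_ne_zero.2 hρ₂H) this
end
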